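/- Let g and h be nondegenerate symmetric bilinear forms on an oriented 4-dimensional real vector space, and define the symmetric bilinear form k by k_{ij} = g_{ia} h^{ab} g_{bj} (where h^{ab} are entries of h^{-1}). Then k is nondegenerate and its Hodge star on 2-forms satisfies ∗_k = sgn(det g / det h) · ∗_g^{-1} ∘ ∗_h ∘ ∗_g. -/
import Mathlib


open Matrix

noncomputable section

/-- The Levi-Civita permutation symbol on four indices in `{0,1,2,3}`. -/
def eps (i j k l : Fin 4) : ℝ :=
  (((j : ℕ) : ℝ) - ((i : ℕ) : ℝ)) * (((k : ℕ) : ℝ) - ((i : ℕ) : ℝ)) *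
    (((l : ℕ) : ℝ) - ((i : ℕ) : ℝ)) * (((k : ℕ) : ℝ) - ((j : ℕ) : ℝ)) *
    (((l : ℕ) : ℝ) - ((j : ℕ) : ℝ)) * (((l : ℕ) : ℝ) - ((k : ℕ) : ℝ)) / 12

/-- First indices of the ordered pairs `O = {01, 02, 03, 23, 31, 12}`. -/
def p1 : Fin 6 → Fin 4 := ![0, 0, 0, 2, 3, 1]

/-- Second indices of the ordered pairs `O = {01, 02, 03, 23, 31, 12}`. -/
def p2 : Fin 6 → Fin 4 := ![1, 2, 3, 3, 1, 2]

/-- The Hodge star operator on 2-forms of a nondegenerate symmetric bilinear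
form `g` on `ℝ⁴`, represented as a `6 × 6` matrix in the basis
`{dx^I : I ∈ O}`: its `(I, J)` entry is the coefficient of `dx^I` in
`∗_g(dx^J) = √|det g| g^{J₁ a} g^{J₂ b} ε_{ab I₁ I₂} dx^I` (no sum over `I`). -/
def starM (g : Matrix (Fin 4) (Fin 4) ℝ) : Matrix (Fin 6) (Fin 6) ℝ :=
  Matrix.of fun I J =>
    Real.sqrt |g.det| * ∑ a : Fin 4, ∑ b : Fin 4,
      g⁻¹ (p1 J) a * g⁻¹ (p2 J) b * eps a b (p1 I) (p2 I)

/-! ### Auxiliary machinery -/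

@[simp] lemma p1_0 : p1 0 = 0 := rfl
@[simp] lemma p1_1 : p1 1 = 0 := rfl
@[simp] lemma p1_2 : p1 2 = 0 := rfl
@[simp] lemma p1_3 : p1 3 = 2 := rfl
@[simp] lemma p1_4 : p1 4 = 3 := rfl
@[simp] lemma p1_5 : p1 5 = 1 := rfl
@[simp] lemma p2_0 : p2 0 = 1 := rfl
@[simp] lemma p2_1 : p2 1 = 2 := rfl
@[simp] lemma p2_2 : p2 2 = 3 := rfl
@[simp] lemma p2_3 : p2 3 = 3 := rfl
@[simp] lemma p2_4 : p2 4 = 1 := rfl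
@[simp] lemma p2_5 : p2 5 = 2 := rfl
@[simp] lemma fin6_mk0 (h : 0 < 6) : (⟨0, h⟩ : Fin 6) = 0 := rfl
@[simp] lemma fin6_mk1 (h : 1 < 6) : (⟨1, h⟩ : Fin 6) = 1 := rfl
@[simp] lemma fin6_mk2 (h : 2 < 6) : (⟨2, h⟩ : Fin 6) = 2 := rfl
@[simp] lemma fin6_mk3 (h : 3 < 6) : (⟨3, h⟩ : Fin 6) = 3 := rfl
@[simp] lemma fin6_mk4 (h : 4 < 6) : (⟨4, h⟩ : Fin 6) = 4 := rfl
@[simp] lemma fin6_mk5 (h : 5 < 6) : (⟨5, h⟩ : Fin 6) = 5 := rfl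

/-- The second exterior power of a `4 × 4` matrix, as a `6 × 6` matrix of
`2 × 2` minors in the basis of ordered pairs `O`. -/
def Lam (A : Matrix (Fin 4) (Fin 4) ℝ) : Matrix (Fin 6) (Fin 6) ℝ :=
  Matrix.of fun I J => A (p1 I) (p1 J) * A (p2 I) (p2 J) - A (p1 I) (p2 J) * A (p2 I) (p1 J)

/-- The permutation matrix exchanging each pair in `O` with its complement. -/
def Jm : Matrix (Fin 6) (Fin 6) ℝ :=
  Matrix.of fun I J => if J + 3 = I then 1 else 0

/-- The complement involution on `O`. -/
def cpl : Fin 6 → Fin 6 := ![3, 4, 5, 0, 1, 2]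
@[simp] lemma cpl_0 : cpl 0 = 3 := rfl
@[simp] lemma cpl_1 : cpl 1 = 4 := rfl
@[simp] lemma cpl_2 : cpl 2 = 5 := rfl
@[simp] lemma cpl_3 : cpl 3 = 0 := rfl
@[simp] lemma cpl_4 : cpl 4 = 1 := rfl
@[simp] lemma cpl_5 : cpl 5 = 2 := rfl

lemma jm_symm : Jmᵀ = Jm := by
  ext I J
  fin_cases I <;> fin_cases J <;> rfl

lemma mul_jm_apply (M : Matrix (Fin 6) (Fin 6) ℝ) (I J : Fin 6) :
    (M * Jm) I J = M I (cpl J) := by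
  have : cpl J = J + 3 := by fin_cases J <;> rfl
  rw [this]
  simp [Jm, Matrix.mul_apply]

lemma jm_mul_apply (M : Matrix (Fin 6) (Fin 6) ℝ) (I J : Fin 6) :
    (Jm * M) I J = M (cpl I) J := by
  have : Jm * M = (Mᵀ * Jm)ᵀ := by rw [Matrix.transpose_mul, jm_symm, Matrix.transpose_transpose]
  rw [this, Matrix.transpose_apply, mul_jm_apply, Matrix.transpose_apply]

lemma lam_one : Lam 1 = 1 := by
  ext I J
  fin_cases I <;> fin_cases J <;>
    simp [Lam, Matrix.one_apply]

lemma lam_transpose (A : Matrix (Fin 4) (Fin 4) ℝ) : Lam Aᵀ = (Lam A)ᵀ := by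
  ext I J
  simp only [Lam, Matrix.of_apply, Matrix.transpose_apply]
  ring

set_option maxHeartbeats 2000000 in
lemma lam_mul (A B : Matrix (Fin 4) (Fin 4) ℝ) : Lam (A * B) = Lam A * Lam B := by
  ext I J
  fin_cases I <;> fin_cases J <;>
    simp only [Lam, Matrix.mul_apply, Fin.sum_univ_six, Fin.sum_univ_four, Matrix.of_apply,
      p1_0, p1_1, p1_2, p1_3, p1_4, p1_5, p2_0, p2_1, p2_2, p2_3, p2_4, p2_5] <;> ring

lemma det_four (A : Matrix (Fin 4) (Fin 4) ℝ) : A.det =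
    A 0 0 * (A 1 1*(A 2 2*A 3 3 - A 2 3*A 3 2) - A 1 2*(A 2 1*A 3 3 - A 2 3*A 3 1) + A 1 3*(A 2 1*A 3 2 - A 2 2*A 3 1))
    - A 0 1 * (A 1 0*(A 2 2*A 3 3 - A 2 3*A 3 2) - A 1 2*(A 2 0*A 3 3 - A 2 3*A 3 0) + A 1 3*(A 2 0*A 3 2 - A 2 2*A 3 0))
    + A 0 2 * (A 1 0*(A 2 1*A 3 3 - A 2 3*A 3 1) - A 1 1*(A 2 0*A 3 3 - A 2 3*A 3 0) + A 1 3*(A 2 0*A 3 1 - A 2 1*A 3 0))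
    - A 0 3 * (A 1 0*(A 2 1*A 3 2 - A 2 2*A 3 1) - A 1 1*(A 2 0*A 3 2 - A 2 2*A 3 0) + A 1 2*(A 2 0*A 3 1 - A 2 1*A 3 0)) := by
  rw [Matrix.det_succ_row_zero, Fin.sum_univ_four]
  simp only [Matrix.det_fin_three, Matrix.submatrix_apply]
  norm_num [Fin.succAbove, Fin.lt_def, Fin.succ, Fin.castSucc, Fin.castAdd, Fin.castLE,
    show (⟨2, by norm_num⟩ : Fin 4) = 2 by rfl, show (⟨3, by norm_num⟩ : Fin 4) = 3 by rfl,
    show ((3 : Fin 4) : ℕ) = 3 by rfl, show ((2 : Fin 4) : ℕ) = 2 by rfl,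
    show ((1 : Fin 4) : ℕ) = 1 by rfl]
  ring

set_option maxHeartbeats 1000000 in
/-- Complementary-minor (Jacobi/Laplace) identity. -/
lemma lam_key (A : Matrix (Fin 4) (Fin 4) ℝ) :
    Lam A * Jm * Lam Aᵀ * Jm = A.det • (1 : Matrix (Fin 6) (Fin 6) ℝ) := by
  have e1 : ∀ I J, (Lam A * Jm * Lam Aᵀ * Jm) I J
      = ∑ K, Lam A I (cpl K) * Lam Aᵀ K (cpl J) := by
    intro I J
    rw [mul_jm_apply, Matrix.mul_apply]
    exact Finset.sum_congr rfl fun K _ => by rw [mul_jm_apply]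
  ext I J
  rw [e1, det_four, Fin.sum_univ_six]
  simp only [Lam, Matrix.of_apply, Matrix.transpose_apply, Matrix.smul_apply, Matrix.one_apply,
    smul_eq_mul, mul_ite, mul_one, mul_zero,
    cpl_0, cpl_1, cpl_2, cpl_3, cpl_4, cpl_5,
    fin6_mk0, fin6_mk1, fin6_mk2, fin6_mk3, fin6_mk4, fin6_mk5,
    p1_0, p1_1, p1_2, p1_3, p1_4, p1_5, p2_0, p2_1, p2_2, p2_3, p2_4, p2_5]
  rcases eq_or_ne I J with rfl | hIJ
  · rw [if_pos rfl]
    fin_cases I <;>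
      simp only [fin6_mk0, fin6_mk1, fin6_mk2, fin6_mk3, fin6_mk4, fin6_mk5,
        p1_0, p1_1, p1_2, p1_3, p1_4, p1_5, p2_0, p2_1, p2_2, p2_3, p2_4, p2_5,
        cpl_0, cpl_1, cpl_2, cpl_3, cpl_4, cpl_5] <;> ring
  · rw [if_neg hIJ]
    fin_cases I <;> fin_cases J <;>
      first
        | exact absurd rfl hIJ
        | (simp only [fin6_mk0, fin6_mk1, fin6_mk2, fin6_mk3, fin6_mk4, fin6_mk5,
            p1_0, p1_1, p1_2, p1_3, p1_4, p1_5, p2_0, p2_1, p2_2, p2_3, p2_4, p2_5,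
            cpl_0, cpl_1, cpl_2, cpl_3, cpl_4, cpl_5]; ring)

set_option maxHeartbeats 1000000 in
/-- The Hodge star in terms of the second exterior power. -/
lemma starM_eq (g : Matrix (Fin 4) (Fin 4) ℝ) :
    starM g = Real.sqrt |g.det| • (Jm * (Lam g⁻¹)ᵀ) := by
  ext I J
  rw [Matrix.smul_apply, jm_mul_apply, Matrix.transpose_apply, smul_eq_mul]
  fin_cases I <;>
    (simp only [starM, Lam, Matrix.of_apply, Fin.sum_univ_four, Fin.isValue,
      fin6_mk0, fin6_mk1, fin6_mk2, fin6_mk3, fin6_mk4, fin6_mk5,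
      cpl_0, cpl_1, cpl_2, cpl_3, cpl_4, cpl_5,
      p1_0, p1_1, p1_2, p1_3, p1_4, p1_5, p2_0, p2_1, p2_2, p2_3, p2_4, p2_5]
     congr 1
     norm_num [eps, show ((3 : Fin 4) : ℕ) = 3 from rfl, show ((2 : Fin 4) : ℕ) = 2 from rfl,
       show ((1 : Fin 4) : ℕ) = 1 from rfl, show ((0 : Fin 4) : ℕ) = 0 from rfl]
     try ring)

/-! ### Sign and square-root arithmetic -/

lemma sign_mul_self' {x : ℝ} (hx : x ≠ 0) : Real.sign x * Real.sign x = 1 := by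
  rcases hx.lt_or_gt with h | h
  · rw [Real.sign_of_neg h]; norm_num
  · rw [Real.sign_of_pos h]; norm_num

lemma abs_mul_inv_sign {x : ℝ} (hx : x ≠ 0) : |x| * x⁻¹ = Real.sign x := by
  rcases hx.lt_or_gt with h | h
  · rw [Real.sign_of_neg h, abs_of_neg h]
    field_simp
  · rw [Real.sign_of_pos h, abs_of_pos h]
    field_simp

lemma sign_div_mul_sign {x y : ℝ} (hx : x ≠ 0) (hy : y ≠ 0) :
    Real.sign (x / y) * Real.sign x = Real.sign y := by
  rcases hx.lt_or_gt with h1 | h1 <;> rcases hy.lt_or_gt with h2 | h2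
  · rw [Real.sign_of_pos (div_pos_of_neg_of_neg h1 h2), Real.sign_of_neg h1,
      Real.sign_of_neg h2]; norm_num
  · rw [Real.sign_of_neg (div_neg_of_neg_of_pos h1 h2), Real.sign_of_neg h1,
      Real.sign_of_pos h2]; norm_num
  · rw [Real.sign_of_neg (div_neg_of_pos_of_neg h1 h2), Real.sign_of_pos h1,
      Real.sign_of_neg h2]; norm_num
  · rw [Real.sign_of_pos (div_pos h1 h2), Real.sign_of_pos h1,
      Real.sign_of_pos h2]; norm_num

lemma sign_mul_inv {y : ℝ} (hy : y ≠ 0) : Real.sign y * y⁻¹ = |y|⁻¹ := by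
  rcases hy.lt_or_gt with h | h
  · rw [Real.sign_of_neg h, abs_of_neg h]; field_simp
  · rw [Real.sign_of_pos h, abs_of_pos h]; field_simp

/-! ### Matrix-level consequences -/

lemma lam_inv_symm {B : Matrix (Fin 4) (Fin 4) ℝ} (hBs : B.IsSymm) :
    (Lam B⁻¹)ᵀ = Lam B⁻¹ := by
  rw [← lam_transpose, Matrix.transpose_nonsing_inv, hBs.eq]

lemma lam_mul_lam_inv {B : Matrix (Fin 4) (Fin 4) ℝ} (hBd : B.det ≠ 0) :
    Lam B * Lam B⁻¹ = 1 := by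
  rw [← lam_mul, Matrix.mul_nonsing_inv _ (isUnit_iff_ne_zero.2 hBd), lam_one]

lemma sandwich {B : Matrix (Fin 4) (Fin 4) ℝ} (hBs : B.IsSymm) (hBd : B.det ≠ 0) :
    Jm * Lam B⁻¹ * Jm = B.det⁻¹ • Lam B := by
  have h1 := lam_key B⁻¹
  have hBt : (B⁻¹)ᵀ = B⁻¹ := by rw [Matrix.transpose_nonsing_inv, hBs.eq]
  rw [hBt] at h1
  calc Jm * Lam B⁻¹ * Jm
      = Lam B * Lam B⁻¹ * Jm * Lam B⁻¹ * Jm := by rw [lam_mul_lam_inv hBd, one_mul]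
    _ = Lam B * (Lam B⁻¹ * Jm * Lam B⁻¹ * Jm) := by
        simp only [Matrix.mul_assoc]
    _ = Lam B * (B⁻¹.det • 1) := by rw [h1]
    _ = B.det⁻¹ • Lam B := by
        rw [Matrix.mul_smul, mul_one, Matrix.det_nonsing_inv, Ring.inverse_eq_inv]

lemma star_sq {B : Matrix (Fin 4) (Fin 4) ℝ} (hBs : B.IsSymm) (hBd : B.det ≠ 0) :
    starM B * starM B = Real.sign B.det • (1 : Matrix (Fin 6) (Fin 6) ℝ) := by
  rw [starM_eq, lam_inv_symm hBs]
  rw [Matrix.smul_mul, Matrix.mul_smul, smul_smul]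
  have e1 : Jm * Lam B⁻¹ * (Jm * Lam B⁻¹) = B.det⁻¹ • (1 : Matrix (Fin 6) (Fin 6) ℝ) := by
    calc Jm * Lam B⁻¹ * (Jm * Lam B⁻¹)
        = (Jm * Lam B⁻¹ * Jm) * Lam B⁻¹ := by simp only [Matrix.mul_assoc]
      _ = B.det⁻¹ • (Lam B * Lam B⁻¹) := by rw [sandwich hBs hBd, Matrix.smul_mul]
      _ = B.det⁻¹ • 1 := by rw [lam_mul_lam_inv hBd]
  rw [e1, smul_smul, Real.mul_self_sqrt (abs_nonneg _), abs_mul_inv_sign hBd]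

lemma starM_inv {B : Matrix (Fin 4) (Fin 4) ℝ} (hBs : B.IsSymm) (hBd : B.det ≠ 0) :
    (starM B)⁻¹ = Real.sign B.det • starM B := by
  apply Matrix.inv_eq_right_inv
  rw [Matrix.mul_smul, star_sq hBs hBd, smul_smul, sign_mul_self' hBd, one_smul]

/-- For nondegenerate symmetric bilinear forms `g, h` on an oriented
4-dimensional space, the bilinear form `k_{ij} = g_{ia} h^{ab} g_{bj}` is
symmetric and nondegenerate, and its Hodge star on 2-forms satisfies
`∗_k = sgn(det g / det h) · ∗_g⁻¹ ∘ ∗_h ∘ ∗_g`. -/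
theorem hodge_mixing (g h : Matrix (Fin 4) (Fin 4) ℝ)
    (hgs : g.IsSymm) (hhs : h.IsSymm) (hgd : g.det ≠ 0) (hhd : h.det ≠ 0) :
    (g * h⁻¹ * g).IsSymm ∧ (g * h⁻¹ * g).det ≠ 0 ∧
      starM (g * h⁻¹ * g) =
        Real.sign (g.det / h.det) • ((starM g)⁻¹ * starM h * starM g) := by
  have hhinv : (h⁻¹)ᵀ = h⁻¹ := by rw [Matrix.transpose_nonsing_inv, hhs.eq]
  have hks : (g * h⁻¹ * g).IsSymm := by
    show (g * h⁻¹ * g)ᵀ = g * h⁻¹ * g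
    rw [Matrix.transpose_mul, Matrix.transpose_mul, hhinv, hgs.eq, Matrix.mul_assoc]
  have hkdet : (g * h⁻¹ * g).det = g.det * h.det⁻¹ * g.det := by
    rw [Matrix.det_mul, Matrix.det_mul, Matrix.det_nonsing_inv, Ring.inverse_eq_inv]
  have hkd : (g * h⁻¹ * g).det ≠ 0 := by
    rw [hkdet]
    exact mul_ne_zero (mul_ne_zero hgd (inv_ne_zero hhd)) hgd
  refine ⟨hks, hkd, ?_⟩
  -- inverse of k
  have hkinv : (g * h⁻¹ * g)⁻¹ = g⁻¹ * h * g⁻¹ := by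
    rw [Matrix.mul_inv_rev, Matrix.mul_inv_rev,
      Matrix.nonsing_inv_nonsing_inv _ (isUnit_iff_ne_zero.2 hhd), Matrix.mul_assoc]
  -- the key matrix computation
  have hmid : Jm * Lam g⁻¹ * (Jm * Lam h⁻¹) * (Jm * Lam g⁻¹)
      = h.det⁻¹ • (Jm * Lam ((g * h⁻¹ * g)⁻¹)) := by
    calc Jm * Lam g⁻¹ * (Jm * Lam h⁻¹) * (Jm * Lam g⁻¹)
        = Jm * Lam g⁻¹ * (Jm * Lam h⁻¹ * Jm) * Lam g⁻¹ := by simp only [Matrix.mul_assoc]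
      _ = Jm * Lam g⁻¹ * (h.det⁻¹ • Lam h) * Lam g⁻¹ := by rw [sandwich hhs hhd]
      _ = h.det⁻¹ • (Jm * (Lam g⁻¹ * Lam h * Lam g⁻¹)) := by
          rw [Matrix.mul_smul, Matrix.smul_mul]
          simp only [Matrix.mul_assoc]
      _ = h.det⁻¹ • (Jm * Lam (g⁻¹ * h * g⁻¹)) := by rw [lam_mul, lam_mul]
      _ = h.det⁻¹ • (Jm * Lam ((g * h⁻¹ * g)⁻¹)) := by rw [hkinv]
  -- rewrite both sides in normal form
  rw [starM_inv hgs hgd, starM_eq (g * h⁻¹ * g), starM_eq g, starM_eq h,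
    lam_inv_symm hks, lam_inv_symm hgs, lam_inv_symm hhs]
  simp only [Matrix.smul_mul, Matrix.mul_smul]
  rw [hmid]
  simp only [smul_smul]
  congr 1
  -- now a scalar identity
  rw [hkdet]
  set x := g.det
  set y := h.det
  have hsx : Real.sqrt |x| * Real.sqrt |x| = |x| := Real.mul_self_sqrt (abs_nonneg _)
  have hsy : Real.sqrt |y| * Real.sqrt |y| = |y| := Real.mul_self_sqrt (abs_nonneg _)
  have hsyne : Real.sqrt |y| ≠ 0 := by
    intro h0
    rw [h0, mul_zero] at hsy
    exact hhd (abs_eq_zero.1 hsy.symm)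
  have habs : |x * y⁻¹ * x| = (|x| * (Real.sqrt |y|)⁻¹) ^ 2 := by
    have e : (|x| * (Real.sqrt |y|)⁻¹) ^ 2 = |x| * |x| * (Real.sqrt |y| * Real.sqrt |y|)⁻¹ := by
      rw [mul_inv]
      ring
    rw [abs_mul, abs_mul, abs_inv, e, hsy]
    ring
  have hnn : 0 ≤ |x| * (Real.sqrt |y|)⁻¹ :=
    mul_nonneg (abs_nonneg _) (inv_nonneg.2 (Real.sqrt_nonneg _))
  rw [habs, Real.sqrt_sq hnn]
  have e2 : Real.sign (x / y) * Real.sign x = Real.sign y := sign_div_mul_sign hgd hhd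
  have e3 : Real.sign y * y⁻¹ = |y|⁻¹ := sign_mul_inv hhd
  calc |x| * (Real.sqrt |y|)⁻¹
      = |x| * (Real.sqrt |y| * (Real.sqrt |y| * Real.sqrt |y|)⁻¹) := by
        have e : Real.sqrt |y| * ((Real.sqrt |y|)⁻¹ * (Real.sqrt |y|)⁻¹) = (Real.sqrt |y|)⁻¹ := by
          rw [← mul_assoc, mul_inv_cancel₀ hsyne, one_mul]
        rw [mul_inv, e]
    _ = |x| * (Real.sqrt |y| * |y|⁻¹) := by rw [hsy]
    _ = (Real.sqrt |x| * Real.sqrt |x|) * (Real.sqrt |y| * |y|⁻¹) := by rw [hsx]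
    _ = (Real.sqrt |x| * Real.sqrt |x|) * (Real.sqrt |y| * (Real.sign y * y⁻¹)) := by rw [e3]
    _ = (Real.sign y) * (Real.sqrt |x| * (Real.sqrt |y| * (Real.sqrt |x| * y⁻¹))) := by ring
    _ = ((x / y).sign * x.sign) * (Real.sqrt |x| * (Real.sqrt |y| * (Real.sqrt |x| * y⁻¹))) := by
        rw [e2]
    _ = (x / y).sign * (Real.sqrt |x| * (Real.sqrt |y| * (x.sign * (Real.sqrt |x| * y⁻¹)))) := by
        ring
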